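/- arXiv:1211.1048 — 11 statements merged into one kernel-verified Lean document; each statement's English description precedes it below -/
import Mathlib

section
/- Every 3-cyclic monotone operator T : X → 2^X on a real Hilbert space X is 3*-monotone. -/
/-!
Taking the triple `(x, y, x)` in the 3-cyclic monotonicity inequality gives monotonicity.
For the second part fix `z' ∈ T z` and `x' ∈ T x`: the identity
`⟪z - y, y' - x'⟫ = ⟪x - z, x'⟫ + ⟪z - x, z'⟫ - (⟪x - y, x'⟫ + ⟪y - z, y'⟫ + ⟪z - x, z'⟫)`
and 3-cyclic monotonicity at `(x, y, z)` bound `⟪z - y, y' - x'⟫` by `⟪x - z, x'⟫ + ⟪z - x, z'⟫`,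
which does not depend on `y' ∈ T y`.
-/

open scoped InnerProductSpace

section

variable {X : Type*} [SeminormedAddCommGroup X] [InnerProductSpace ℝ X]

theorem inner_sub_add_inner_sub_add_inner_sub_self (x x' y y' : X) :
    ⟪x - y, x'⟫_ℝ + ⟪y - x, y'⟫_ℝ + ⟪x - x, x'⟫_ℝ = ⟪x - y, x' - y'⟫_ℝ := by
  rw [sub_self, inner_zero_left, add_zero, ← neg_sub x y, inner_neg_left, inner_sub_right]
  ring

theorem inner_sub_sub_eq_sub_cyclic_sum (x x' y y' z z' : X) :
    ⟪z - y, y' - x'⟫_ℝ = ⟪x - z, x'⟫_ℝ + ⟪z - x, z'⟫_ℝ -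
      (⟪x - y, x'⟫_ℝ + ⟪y - z, y'⟫_ℝ + ⟪z - x, z'⟫_ℝ) := by
  simp only [inner_sub_left, inner_sub_right]
  ring

def ThreeCyclicMonotone (T : X → Set X) : Prop :=
  ∀ x x' y y' z z', x' ∈ T x → y' ∈ T y → z' ∈ T z →
    0 ≤ ⟪x - y, x'⟫_ℝ + ⟪y - z, y'⟫_ℝ + ⟪z - x, z'⟫_ℝ

namespace ThreeCyclicMonotone

variable {T : X → Set X}

theorem inner_sub_nonneg (hT : ThreeCyclicMonotone T) {x x' y y' : X}
    (hx : x' ∈ T x) (hy : y' ∈ T y) : 0 ≤ ⟪x - y, x' - y'⟫_ℝ :=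
  inner_sub_add_inner_sub_add_inner_sub_self x x' y y' ▸ hT x x' y y' x x' hx hy hx

theorem inner_sub_sub_le (hT : ThreeCyclicMonotone T) {x x' y y' z z' : X}
    (hx : x' ∈ T x) (hy : y' ∈ T y) (hz : z' ∈ T z) :
    ⟪z - y, y' - x'⟫_ℝ ≤ ⟪x - z, x'⟫_ℝ + ⟪z - x, z'⟫_ℝ := by
  rw [inner_sub_sub_eq_sub_cyclic_sum x x' y y' z z']
  linarith [hT x x' y y' z z' hx hy hz]

theorem bddAbove_inner_sub_sub (hT : ThreeCyclicMonotone T) {z x x' : X}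
    (hz : (T z).Nonempty) (hx : x' ∈ T x) :
    BddAbove {r : ℝ | ∃ y y', y' ∈ T y ∧ r = ⟪z - y, y' - x'⟫_ℝ} := by
  obtain ⟨z', hz'⟩ := hz
  refine ⟨⟪x - z, x'⟫_ℝ + ⟪z - x, z'⟫_ℝ, ?_⟩
  rintro r ⟨y, y', hy, rfl⟩
  exact hT.inner_sub_sub_le hx hy hz'

end ThreeCyclicMonotone

end

theorem threeCyclic_is_threeStar_general
    {X : Type*} [NormedAddCommGroup X] [InnerProductSpace ℝ X]
    (T : X → Set X)
    (h3cm : ∀ x x' y y' z z', x' ∈ T x → y' ∈ T y → z' ∈ T z →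
      (0:ℝ) ≤ inner ℝ (x - y) x' + inner ℝ (y - z) y' + inner ℝ (z - x) z') :
    (∀ x x' y y', x' ∈ T x → y' ∈ T y → (0:ℝ) ≤ inner ℝ (x - y) (x' - y')) ∧
    (∀ z, (T z).Nonempty → ∀ x x', x' ∈ T x →
      BddAbove {r : ℝ | ∃ y y', y' ∈ T y ∧ r = inner ℝ (z - y) (y' - x')}) := by
  have hT : ThreeCyclicMonotone T := h3cm
  exact ⟨fun _ _ _ _ hx hy ↦ hT.inner_sub_nonneg hx hy,
    fun _ hz _ _ hx ↦ hT.bddAbove_inner_sub_sub hz hx⟩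

/-- Every 3-cyclic monotone operator on a real Hilbert space is 3*-monotone. -/
theorem threeCyclic_is_threeStar
    {X : Type*} [NormedAddCommGroup X] [InnerProductSpace ℝ X] [CompleteSpace X]
    (T : X → Set X)
    (h3cm : ∀ x x' y y' z z', x' ∈ T x → y' ∈ T y → z' ∈ T z →
      (0:ℝ) ≤ inner ℝ (x - y) x' + inner ℝ (y - z) y' + inner ℝ (z - x) z') :
    (∀ x x' y y', x' ∈ T x → y' ∈ T y → (0:ℝ) ≤ inner ℝ (x - y) (x' - y')) ∧
    (∀ z, (T z).Nonempty → ∀ x x', x' ∈ T x →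
      BddAbove {r : ℝ | ∃ y y', y' ∈ T y ∧ r = inner ℝ (z - y) (y' - x')}) :=
  threeCyclic_is_threeStar_general T h3cm
end

section
/- If T : X → 2^X is 3-cyclic monotone and maximal monotone, then T is paramonotone. -/
/- Given (x, x') and (y, y') in gra T with ⟨x - y, x' - y'⟩ = 0, the 3-cyclic inequality through
(y, y'), (x, x') and any (z, z') ∈ gra T says exactly that ⟨z - y, z' - x'⟩ ≥ 0; maximality then
puts x' in T y, and symmetrically y' in T x. -/

lemma inner_sub_sub_eq_cyclicSum_sub {X : Type*} [NormedAddCommGroup X] [InnerProductSpace ℝ X]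
    (x x' y y' z z' : X) :
    inner ℝ (z - y) (z' - x') =
      inner ℝ (y - x) y' + inner ℝ (x - z) x' + inner ℝ (z - y) z' - inner ℝ (x - y) (x' - y') := by
  simp only [inner_sub_left, inner_sub_right]
  ring

lemma inner_sub_sub_nonneg_of_threeCyclic {X : Type*} [NormedAddCommGroup X]
    [InnerProductSpace ℝ X] {T : X → Set X}
    (h3cm : ∀ x x' y y' z z', x' ∈ T x → y' ∈ T y → z' ∈ T z →
      (0:ℝ) ≤ inner ℝ (x - y) x' + inner ℝ (y - z) y' + inner ℝ (z - x) z')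
    {x x' y y' z z' : X} (hx : x' ∈ T x) (hy : y' ∈ T y) (hz : z' ∈ T z)
    (h0 : inner ℝ (x - y) (x' - y') = (0:ℝ)) :
    (0:ℝ) ≤ inner ℝ (z - y) (z' - x') := by
  rw [inner_sub_sub_eq_cyclicSum_sub, h0, sub_zero]
  exact h3cm y y' x x' z z' hy hx hz

theorem threeCyclic_maximal_is_paramonotone_general
    {X : Type*} [NormedAddCommGroup X] [InnerProductSpace ℝ X]
    (T : X → Set X)
    (h3cm : ∀ x x' y y' z z', x' ∈ T x → y' ∈ T y → z' ∈ T z →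
      (0:ℝ) ≤ inner ℝ (x - y) x' + inner ℝ (y - z) y' + inner ℝ (z - x) z')
    (hmax : ∀ a a', (∀ x x', x' ∈ T x → (0:ℝ) ≤ inner ℝ (x - a) (x' - a')) → a' ∈ T a) :
    ∀ x x' y y', x' ∈ T x → y' ∈ T y →
      (inner ℝ (x - y) (x' - y') : ℝ) = 0 → x' ∈ T y ∧ y' ∈ T x := by
  intro x x' y y' hx hy h0
  have h0_symm : inner ℝ (y - x) (y' - x') = (0:ℝ) := by
    rwa [← neg_sub x y, ← neg_sub x' y', inner_neg_neg]
  exact ⟨hmax y x' fun _ _ hz => inner_sub_sub_nonneg_of_threeCyclic h3cm hx hy hz h0,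
    hmax x y' fun _ _ hz => inner_sub_sub_nonneg_of_threeCyclic h3cm hy hx hz h0_symm⟩

/-- A 3-cyclic monotone and maximal monotone operator is paramonotone. -/
theorem threeCyclic_maximal_is_paramonotone
    {X : Type*} [NormedAddCommGroup X] [InnerProductSpace ℝ X] [CompleteSpace X]
    (T : X → Set X)
    (hmono : ∀ x x' y y', x' ∈ T x → y' ∈ T y → (0:ℝ) ≤ inner ℝ (x - y) (x' - y'))
    (h3cm : ∀ x x' y y' z z', x' ∈ T x → y' ∈ T y → z' ∈ T z →
      (0:ℝ) ≤ inner ℝ (x - y) x' + inner ℝ (y - z) y' + inner ℝ (z - x) z')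
    (hmax : ∀ a a', (∀ x x', x' ∈ T x → (0:ℝ) ≤ inner ℝ (x - a) (x' - a')) → a' ∈ T a) :
    ∀ x x' y y', x' ∈ T x → y' ∈ T y →
      (inner ℝ (x - y) (x' - y') : ℝ) = 0 → x' ∈ T y ∧ y' ∈ T x :=
  threeCyclic_maximal_is_paramonotone_general T h3cm hmax
end

section
/- Let T : X → 2^X be a paramonotone operator with convex domain. Then T⁻¹(0) = {x : 0 ∈ Tx} is a convex set. -/
/-!
If `0 ∈ T x`, `0 ∈ T y` and `z = a • x + b • y`, convexity of the domain gives some `w ∈ T z`.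
Monotonicity makes `⟪z - x, w⟫` and `⟪z - y, w⟫` nonnegative, while
`a • (z - x) + b • (z - y) = 0` forces their weighted sum to vanish; so `⟪z - x, w⟫ = 0`
(for `a > 0`), and paramonotonicity applied to `(z, w)` and `(x, 0)` yields `0 ∈ T z`.
-/

open scoped RealInnerProductSpace

section

variable {X : Type*} [NormedAddCommGroup X] [InnerProductSpace ℝ X]

theorem inner_sub_eq_zero_of_nonneg_of_smul_add_smul {x y w : X} {a b : ℝ}
    (ha : 0 < a) (hb : 0 ≤ b) (hab : a + b = 1)
    (hx : 0 ≤ ⟪a • x + b • y - x, w⟫) (hy : 0 ≤ ⟪a • x + b • y - y, w⟫) :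
    ⟪a • x + b • y - x, w⟫ = 0 := by
  have hcomb : a • (a • x + b • y - x) + b • (a • x + b • y - y) = 0 := by
    rw [show b = 1 - a by linarith]; module
  have hsum : a * ⟪a • x + b • y - x, w⟫ + b * ⟪a • x + b • y - y, w⟫ = 0 := by
    rw [← real_inner_smul_left, ← real_inner_smul_left, ← inner_add_left, hcomb, inner_zero_left]
  have : a * ⟪a • x + b • y - x, w⟫ = 0 := by nlinarith [mul_nonneg hb hy, mul_nonneg ha.le hx]
  exact (mul_eq_zero.mp this).resolve_left ha.ne'

theorem zero_mem_of_inner_sub_eq_zero {T : X → Set X}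
    (hpara : ∀ x x' y y', x' ∈ T x → y' ∈ T y →
      (inner ℝ (x - y) (x' - y') : ℝ) = 0 → x' ∈ T y ∧ y' ∈ T x)
    {x z w : X} (hx : 0 ∈ T x) (hw : w ∈ T z) (hzero : ⟪z - x, w⟫ = 0) : 0 ∈ T z :=
  (hpara z w x 0 hw hx (by rwa [sub_zero])).2

end

theorem paramonotone_inverse_zero_convex_general
    {X : Type*} [NormedAddCommGroup X] [InnerProductSpace ℝ X]
    (T : X → Set X)
    (hmono : ∀ x x' y y', x' ∈ T x → y' ∈ T y → (0:ℝ) ≤ inner ℝ (x - y) (x' - y'))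
    (hpara : ∀ x x' y y', x' ∈ T x → y' ∈ T y →
      (inner ℝ (x - y) (x' - y') : ℝ) = 0 → x' ∈ T y ∧ y' ∈ T x)
    (hdom : Convex ℝ {x | (T x).Nonempty}) :
    Convex ℝ {x | (0:X) ∈ T x} := by
  intro x hx y hy a b ha hb hab
  obtain ⟨w, hw⟩ : (T (a • x + b • y)).Nonempty := hdom ⟨0, hx⟩ ⟨0, hy⟩ ha hb hab
  have hwx : 0 ≤ ⟪a • x + b • y - x, w⟫ := by simpa using hmono _ _ _ _ hw hx
  have hwy : 0 ≤ ⟪a • x + b • y - y, w⟫ := by simpa using hmono _ _ _ _ hw hy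
  rcases ha.eq_or_lt with rfl | ha_pos
  · simpa [show b = 1 by linarith] using hy
  · exact zero_mem_of_inner_sub_eq_zero hpara hx hw
      (inner_sub_eq_zero_of_nonneg_of_smul_add_smul ha_pos hb hab hwx hwy)

/-- For a paramonotone operator with convex domain, T⁻¹(0) is convex. -/
theorem paramonotone_inverse_zero_convex
    {X : Type*} [NormedAddCommGroup X] [InnerProductSpace ℝ X] [CompleteSpace X]
    (T : X → Set X)
    (hmono : ∀ x x' y y', x' ∈ T x → y' ∈ T y → (0:ℝ) ≤ inner ℝ (x - y) (x' - y'))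
    (hpara : ∀ x x' y y', x' ∈ T x → y' ∈ T y →
      (inner ℝ (x - y) (x' - y') : ℝ) = 0 → x' ∈ T y ∧ y' ∈ T x)
    (hdom : Convex ℝ {x | (T x).Nonempty}) :
    Convex ℝ {x | (0:X) ∈ T x} :=
  paramonotone_inverse_zero_convex_general T hmono hpara hdom
end

section
/- Any monotone linear relation A : X → 2^X with full domain (dom A = X) is maximal monotone and single-valued. -/
open scoped RealInnerProductSpace

theorem eq_zero_of_forall_sq_mul_sub_mul_nonneg {c d : ℝ} (h : ∀ t : ℝ, 0 ≤ t ^ 2 * d - t * c) :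
    c = 0 := by
  -- `0` is a minimum, so the derivative `-c` there vanishes.
  have hmin : IsLocalMin (fun t : ℝ => t ^ 2 * d - t * c) 0 :=
    Filter.Eventually.of_forall fun t => by simpa using h t
  have hderiv : HasDerivAt (fun t : ℝ => t ^ 2 * d - t * c) (-c) 0 := by
    simpa using
      ((hasDerivAt_pow 2 (0 : ℝ)).mul_const d).fun_sub ((hasDerivAt_id' (0 : ℝ)).mul_const c)
  exact neg_eq_zero.mp (hmin.hasDerivAt_eq_zero hderiv)

section

variable {X : Type*} [NormedAddCommGroup X] [InnerProductSpace ℝ X]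

/-- Test `(a, a')` against the line `(a, z) + t • (v, w)` of the graph, `v = a' - z`: the resulting
quadratic in `t` is nonnegative and vanishes at `0`, which forces `‖v‖² = 0`. -/
theorem Submodule.eq_of_forall_inner_nonneg_of_mem (G : Submodule ℝ (X × X))
    (hdom : ∀ x, ∃ y, (x, y) ∈ G) {a a' z : X}
    (hrel : ∀ p ∈ G, 0 ≤ ⟪p.1 - a, p.2 - a'⟫) (hz : (a, z) ∈ G) : a' = z := by
  set v := a' - z
  obtain ⟨w, hw⟩ := hdom v
  have hline (t : ℝ) : 0 ≤ t ^ 2 * ⟪v, w⟫ - t * ⟪v, v⟫ := by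
    have h := hrel _ (G.add_mem hz (G.smul_mem t hw))
    have hsnd : z + t • w - a' = t • w - v := by simp only [v]; abel
    simp only [Prod.fst_add, Prod.snd_add, Prod.smul_fst, Prod.smul_snd, add_sub_cancel_left,
      hsnd, real_inner_smul_left, inner_sub_right, real_inner_smul_right] at h
    linarith
  have hv : v = 0 := inner_self_eq_zero.mp (eq_zero_of_forall_sq_mul_sub_mul_nonneg hline)
  exact sub_eq_zero.mp hv

end

theorem monotone_linear_relation_full_domain_general
    {X : Type*} [NormedAddCommGroup X] [InnerProductSpace ℝ X]
    (A : X → Set X)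
    (hlin : ∃ G : Submodule ℝ (X × X), ∀ x y, y ∈ A x ↔ (x, y) ∈ G)
    (hmono : ∀ x x' y y', x' ∈ A x → y' ∈ A y → (0:ℝ) ≤ inner ℝ (x - y) (x' - y'))
    (hdom : ∀ x : X, (A x).Nonempty) :
    (∀ a a', (∀ x x', x' ∈ A x → (0:ℝ) ≤ inner ℝ (x - a) (x' - a')) → a' ∈ A a) ∧
    (∀ x : X, ∃! x', x' ∈ A x) := by
  obtain ⟨G, hG⟩ := hlin
  have hdomG : ∀ x, ∃ y, (x, y) ∈ G := fun x => (hdom x).imp fun y => (hG x y).mp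
  have hunique : ∀ a a' z, (∀ x x', x' ∈ A x → (0:ℝ) ≤ ⟪x - a, x' - a'⟫) → z ∈ A a → a' = z :=
    fun a a' z hrel hz => G.eq_of_forall_inner_nonneg_of_mem hdomG
      (fun p hp => hrel p.1 p.2 ((hG _ _).mpr hp)) ((hG a z).mp hz)
  refine ⟨fun a a' hrel => ?_, fun x => ?_⟩
  · obtain ⟨z, hz⟩ := hdom a
    rwa [hunique a a' z hrel hz]
  · obtain ⟨z, hz⟩ := hdom x
    exact ⟨z, hz, fun y hy => hunique x y z (fun p p' hp => hmono p p' x y hp hy) hz⟩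

/-- A monotone linear relation with full domain is maximal monotone and single-valued. -/
theorem monotone_linear_relation_full_domain
    {X : Type*} [NormedAddCommGroup X] [InnerProductSpace ℝ X] [CompleteSpace X]
    (A : X → Set X)
    (hlin : ∃ G : Submodule ℝ (X × X), ∀ x y, y ∈ A x ↔ (x, y) ∈ G)
    (hmono : ∀ x x' y y', x' ∈ A x → y' ∈ A y → (0:ℝ) ≤ inner ℝ (x - y) (x' - y'))
    (hdom : ∀ x : X, (A x).Nonempty) :
    (∀ a a', (∀ x x', x' ∈ A x → (0:ℝ) ≤ inner ℝ (x - a) (x' - a')) → a' ∈ A a) ∧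
    (∀ x : X, ∃! x', x' ∈ A x) :=
  monotone_linear_relation_full_domain_general A hlin hmono hdom
end

section
/- If A : X → 2^X is a monotone linear relation, then dom A ⊆ (A0)^⊥ and A0 ⊆ (dom A)^⊥. -/
/-!
Scaling a point `(x, x')` of the graph by `t` and comparing it with `(0, c)` by monotonicity gives
`0 ≤ t² ⟪x, x'⟫ - t ⟪x, c⟫` for every real `t`; a quadratic without constant term that is
nonnegative everywhere has vanishing linear coefficient, so `⟪x, c⟫ = 0`.
-/

open scoped RealInnerProductSpace

lemma eq_zero_of_forall_quadratic_nonneg {a b : ℝ} (h : ∀ t : ℝ, 0 ≤ a * (t * t) + b * t) :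
    b = 0 := by
  have hdiscrim : discrim a b 0 ≤ 0 := discrim_le_zero fun t ↦ by simpa using h t
  rw [discrim, mul_zero, sub_zero] at hdiscrim
  exact pow_eq_zero_iff two_ne_zero |>.mp (le_antisymm hdiscrim (sq_nonneg b))

lemma inner_eq_zero_of_mem_of_mem_zero {X : Type*} [NormedAddCommGroup X] [InnerProductSpace ℝ X]
    {A : X → Set X} (hlin : ∃ G : Submodule ℝ (X × X), ∀ x y, y ∈ A x ↔ (x, y) ∈ G)
    (hmono : ∀ x x' y y', x' ∈ A x → y' ∈ A y → (0 : ℝ) ≤ ⟪x - y, x' - y'⟫)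
    {x x' c : X} (hx : x' ∈ A x) (hc : c ∈ A 0) : ⟪x, c⟫ = 0 := by
  obtain ⟨G, hG⟩ := hlin
  have hscale (t : ℝ) : t • x' ∈ A (t • x) :=
    (hG _ _).mpr (G.smul_mem t ((hG x x').mp hx))
  refine neg_eq_zero.mp (eq_zero_of_forall_quadratic_nonneg (a := ⟪x, x'⟫) fun t ↦ ?_)
  calc (0 : ℝ) ≤ ⟪t • x - 0, t • x' - c⟫ := hmono _ _ _ _ (hscale t) hc
    _ = ⟪x, x'⟫ * (t * t) + -⟪x, c⟫ * t := by
      rw [sub_zero, inner_sub_right, real_inner_smul_left, real_inner_smul_left,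
        real_inner_smul_right]
      ring

theorem monotone_linear_relation_domain_perp_general
    {X : Type*} [NormedAddCommGroup X] [InnerProductSpace ℝ X]
    (A : X → Set X)
    (hlin : ∃ G : Submodule ℝ (X × X), ∀ x y, y ∈ A x ↔ (x, y) ∈ G)
    (hmono : ∀ x x' y y', x' ∈ A x → y' ∈ A y → (0:ℝ) ≤ inner ℝ (x - y) (x' - y')) :
    (∀ x, (A x).Nonempty → ∀ c ∈ A 0, (inner ℝ x c : ℝ) = 0) ∧
    (∀ c ∈ A 0, ∀ x, (A x).Nonempty → (inner ℝ c x : ℝ) = 0) := by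
  have hperp (x : X) (hx : (A x).Nonempty) (c : X) (hc : c ∈ A 0) : ⟪x, c⟫ = 0 :=
    inner_eq_zero_of_mem_of_mem_zero hlin hmono hx.some_mem hc
  exact ⟨hperp, fun c hc x hx ↦ real_inner_comm x c ▸ hperp x hx c hc⟩

/-- For a monotone linear relation, dom A ⊆ (A0)^⊥ and A0 ⊆ (dom A)^⊥. -/
theorem monotone_linear_relation_domain_perp
    {X : Type*} [NormedAddCommGroup X] [InnerProductSpace ℝ X] [CompleteSpace X]
    (A : X → Set X)
    (hlin : ∃ G : Submodule ℝ (X × X), ∀ x y, y ∈ A x ↔ (x, y) ∈ G)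
    (hmono : ∀ x x' y y', x' ∈ A x → y' ∈ A y → (0:ℝ) ≤ inner ℝ (x - y) (x' - y')) :
    (∀ x, (A x).Nonempty → ∀ c ∈ A 0, (inner ℝ x c : ℝ) = 0) ∧
    (∀ c ∈ A 0, ∀ x, (A x).Nonempty → (inner ℝ c x : ℝ) = 0) :=
  monotone_linear_relation_domain_perp_general A hlin hmono
end

section
/- Let A : X → 2^X be a monotone linear relation. For any x, y ∈ dom A, the set {⟨y, x*⟩ : x* ∈ Ax} is a singleton. -/
/-!
If `x₁*, x₂* ∈ A x` then `z = x₁* - x₂* ∈ A 0`, and for `y* ∈ A y` linearity gives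
`t y* - z ∈ A (t y)` for every real `t`. Monotonicity against `(0, 0)` makes the quadratic
`t ↦ t² ⟨y, y*⟩ - t ⟨y, z⟩` nonnegative, so its discriminant `⟨y, z⟩²` vanishes.
-/

open RealInnerProductSpace

namespace Submodule

variable {X : Type*} [NormedAddCommGroup X] [InnerProductSpace ℝ X]

/-- For a linear relation, monotonicity `⟪x - y, x* - y*⟫ ≥ 0` reduces to this, since the
graph is closed under subtraction and contains `(0, 0)`. -/
def IsMonotoneGraph (G : Submodule ℝ (X × X)) : Prop :=
  ∀ p ∈ G, 0 ≤ ⟪p.1, p.2⟫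

theorem IsMonotoneGraph.inner_eq_zero {G : Submodule ℝ (X × X)} (hG : G.IsMonotoneGraph)
    {y y' z : X} (hz : (0, z) ∈ G) (hy : (y, y') ∈ G) : ⟪y, z⟫ = 0 := by
  have hquad : ∀ t : ℝ, 0 ≤ ⟪y, y'⟫ * (t * t) + (-⟪y, z⟫) * t + 0 := fun t => by
    have := hG _ (G.sub_mem (G.smul_mem t hy) hz)
    simp only [Prod.smul_mk, Prod.mk_sub_mk, sub_zero, inner_sub_right, real_inner_smul_left,
      real_inner_smul_right] at this
    linarith
  have := discrim_le_zero hquad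
  simp only [discrim, mul_zero, sub_zero, neg_sq] at this
  exact pow_eq_zero_iff two_ne_zero |>.mp (le_antisymm this (sq_nonneg _))

theorem IsMonotoneGraph.inner_eq_of_mem {G : Submodule ℝ (X × X)} (hG : G.IsMonotoneGraph)
    {x x₁ x₂ y y' : X} (hx₁ : (x, x₁) ∈ G) (hx₂ : (x, x₂) ∈ G) (hy : (y, y') ∈ G) :
    ⟪y, x₁⟫ = ⟪y, x₂⟫ := by
  have hz : ((0 : X), x₁ - x₂) ∈ G := by simpa using G.sub_mem hx₁ hx₂
  rw [← sub_eq_zero, ← inner_sub_right]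
  exact hG.inner_eq_zero hz hy

end Submodule

theorem monotone_linear_relation_inner_singleton_general
    {X : Type*} [NormedAddCommGroup X] [InnerProductSpace ℝ X]
    (A : X → Set X)
    (hlin : ∃ G : Submodule ℝ (X × X), ∀ x y, y ∈ A x ↔ (x, y) ∈ G)
    (hmono : ∀ x x' y y', x' ∈ A x → y' ∈ A y → (0:ℝ) ≤ inner ℝ (x - y) (x' - y'))
    (x y : X) (hx : (A x).Nonempty) (hy : (A y).Nonempty) :
    ∃ r : ℝ, {r' : ℝ | ∃ x' ∈ A x, r' = inner ℝ y x'} = {r} := by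
  obtain ⟨G, hG⟩ := hlin
  have hGmono : G.IsMonotoneGraph := fun p hp => by
    simpa using hmono p.1 p.2 0 0 ((hG _ _).mpr hp) ((hG 0 0).mpr G.zero_mem)
  obtain ⟨x₀, hx₀⟩ := hx
  obtain ⟨y', hy'⟩ := hy
  refine ⟨⟪y, x₀⟫, Set.eq_singleton_iff_unique_mem.mpr ⟨⟨x₀, hx₀, rfl⟩, ?_⟩⟩
  rintro _ ⟨x', hx', rfl⟩
  exact hGmono.inner_eq_of_mem ((hG _ _).mp hx') ((hG _ _).mp hx₀) ((hG _ _).mp hy')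

/-- For a monotone linear relation and x, y in its domain, {⟨y, x*⟩ : x* ∈ Ax} is a singleton. -/
theorem monotone_linear_relation_inner_singleton
    {X : Type*} [NormedAddCommGroup X] [InnerProductSpace ℝ X] [CompleteSpace X]
    (A : X → Set X)
    (hlin : ∃ G : Submodule ℝ (X × X), ∀ x y, y ∈ A x ↔ (x, y) ∈ G)
    (hmono : ∀ x x' y y', x' ∈ A x → y' ∈ A y → (0:ℝ) ≤ inner ℝ (x - y) (x' - y'))
    (x y : X) (hx : (A x).Nonempty) (hy : (A y).Nonempty) :
    ∃ r : ℝ, {r' : ℝ | ∃ x' ∈ A x, r' = inner ℝ y x'} = {r} :=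
  monotone_linear_relation_inner_singleton_general A hlin hmono x y hx hy
end

section
/- If a maximal monotone single-valued linear relation A : X → X is locally bounded, then dom A = X. -/
/-!
Monotonicity together with `(0, 0) ∈ A` makes every vector orthogonal to `dom A` monotonically
related to `(0, 0)`, hence, by maximality, an element of `A 0 = {0}`; so `dom A` is dense. On its
domain `A` is a linear map, bounded near `0` and hence continuous, which extends to a continuous
linear map `F` on `X`. Being monotonically related to `(x, F x)` is a closed condition in `x` that
holds on the dense set `dom A`, so it holds everywhere, and maximality gives `F x ∈ A x`.
-/

open Set Metric
open scoped RealInnerProductSpace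

theorem AddMonoidHom.continuous_of_norm_le_of_norm_lt {E F : Type*} [SeminormedAddCommGroup E]
    [SeminormedAddCommGroup F] [NormedSpace ℝ F] (f : E →+ F) {ε M : ℝ} (hε : 0 < ε)
    (hM : ∀ x, ‖x‖ < ε → ‖f x‖ ≤ M) : Continuous f := by
  refine f.continuous_of_isBounded_nhds_zero (ball_mem_nhds 0 hε) ?_
  refine isBounded_iff_forall_norm_le.2 ⟨M, ?_⟩
  rintro _ ⟨x, hx, rfl⟩
  exact hM x (mem_ball_zero_iff.1 hx)

theorem Submodule.exists_extend_of_dense {𝕜 E F : Type*} [NontriviallyNormedField 𝕜]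
    [NormedAddCommGroup E] [NormedSpace 𝕜 E] [NormedAddCommGroup F] [NormedSpace 𝕜 F]
    [CompleteSpace F] {D : Submodule 𝕜 E} (hD : Dense (D : Set E)) (f : D →L[𝕜] F) :
    ∃ g : E →L[𝕜] F, ∀ x : D, g x = f x :=
  ⟨f.extend D.subtypeL,
    f.extend_eq (e := D.subtypeL) hD.denseRange_val isometry_subtype_coe.isUniformInducing⟩

section MonotoneGraph

variable {X : Type*} [NormedAddCommGroup X] [InnerProductSpace ℝ X]

def MonotonicallyRelated (G : Set (X × X)) (a : X × X) : Prop :=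
  ∀ p ∈ G, 0 ≤ ⟪p.1 - a.1, p.2 - a.2⟫

/-- Monotonicity of `G` is the implication `a ∈ G → MonotonicallyRelated G a`, maximality
the converse. -/
def IsMaximalMonotone (G : Set (X × X)) : Prop :=
  ∀ a, MonotonicallyRelated G a ↔ a ∈ G

theorem isClosed_setOf_monotonicallyRelated (G : Set (X × X)) :
    IsClosed {a | MonotonicallyRelated G a} := by
  simp only [MonotonicallyRelated, ofPred_forall]
  exact isClosed_biInter fun p _ => isClosed_le continuous_const (by fun_prop)

theorem IsMaximalMonotone.mem_of_forall_mem_of_dense {G : Set (X × X)}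
    (hG : IsMaximalMonotone G) {f : X → X} (hf : Continuous f) {D : Set X} (hD : Dense D)
    (hDf : ∀ z ∈ D, (z, f z) ∈ G) (x : X) : (x, f x) ∈ G := by
  have hclosed : IsClosed {z | MonotonicallyRelated G (z, f z)} :=
    (isClosed_setOf_monotonicallyRelated G).preimage (continuous_id.prodMk hf)
  exact (hG _).1 (hclosed.closure_subset_iff.2 (fun z hz => (hG _).2 (hDf z hz)) (hD x))

variable {G : Submodule ℝ (X × X)}

theorem IsMaximalMonotone.mem_of_mem_orthogonal_map_fst
    (hG : IsMaximalMonotone (G : Set (X × X))) {v : X}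
    (hv : v ∈ (G.map (LinearMap.fst ℝ X X))ᗮ) : ((0 : X), v) ∈ G := by
  refine (hG _).1 fun p hp => ?_
  have horth : ⟪p.1, v⟫ = 0 :=
    (Submodule.mem_orthogonal _ v).1 hv p.1 (Submodule.mem_map_of_mem hp)
  have hp0 : 0 ≤ ⟪p.1, p.2⟫ := by simpa using (hG 0).2 G.zero_mem p hp
  simpa [inner_sub_right, horth] using hp0

theorem IsMaximalMonotone.dense_map_fst [CompleteSpace X]
    (hG : IsMaximalMonotone (G : Set (X × X))) (hfun : ∀ p ∈ G, p.1 = 0 → p.2 = 0) :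
    Dense (G.map (LinearMap.fst ℝ X X) : Set X) := by
  rw [Submodule.dense_iff_topologicalClosure_eq_top, Submodule.topologicalClosure_eq_top_iff,
    Submodule.eq_bot_iff]
  exact fun v hv => hfun _ (hG.mem_of_mem_orthogonal_map_fst hv) rfl

end MonotoneGraph

/-- A locally bounded, single-valued, maximal monotone linear relation has full domain. -/
theorem locally_bounded_maximal_monotone_linear_relation_full_domain
    {X : Type*} [NormedAddCommGroup X] [InnerProductSpace ℝ X] [CompleteSpace X]
    (A : X → Set X)
    (hlin : ∃ G : Submodule ℝ (X × X), ∀ x y, y ∈ A x ↔ (x, y) ∈ G)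
    (hmono : ∀ x x' y y', x' ∈ A x → y' ∈ A y → (0:ℝ) ≤ inner ℝ (x - y) (x' - y'))
    (hmax : ∀ a a', (∀ x x', x' ∈ A x → (0:ℝ) ≤ inner ℝ (x - a) (x' - a')) → a' ∈ A a)
    (hsv : ∀ x, (A x).Nonempty → ∃ x', A x = {x'})
    (hlb : ∀ x : X, ∃ ε > (0:ℝ), ∃ M : ℝ,
      ∀ y y', y' ∈ A y → ‖y - x‖ < ε → ‖y'‖ ≤ M) :
    ∀ x : X, (A x).Nonempty := by
  obtain ⟨G, hG⟩ := hlin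
  obtain rfl : A = fun x => {y | (x, y) ∈ G} := funext fun x => Set.ext (hG x)
  have hmaxmono : IsMaximalMonotone (G : Set (X × X)) := fun a =>
    ⟨fun ha => hmax a.1 a.2 fun x x' h => ha (x, x') h, fun ha p hp => hmono _ _ _ _ hp ha⟩
  have hfun : ∀ p ∈ G, p.1 = 0 → p.2 = 0 := by
    rintro ⟨_, v⟩ hv rfl
    obtain ⟨w, hw⟩ := hsv 0 ⟨v, hv⟩
    have hvw : v ∈ ({w} : Set X) := hw ▸ hv
    have h0w : (0 : X) ∈ ({w} : Set X) := hw ▸ G.zero_mem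
    exact hvw.trans h0w.symm
  have hdense := hmaxmono.dense_map_fst hfun
  set T := G.toLinearPMap
  obtain ⟨ε, hε, M, hM⟩ := hlb 0
  have hT : Continuous T.toFun :=
    T.toFun.toAddMonoidHom.continuous_of_norm_le_of_norm_lt hε fun y hy =>
      hM y _ (Submodule.mem_graph_toLinearPMap hfun y) (by simpa using hy)
  obtain ⟨F, hF⟩ := Submodule.exists_extend_of_dense hdense ⟨T.toFun, hT⟩
  refine fun x => ⟨F x, hmaxmono.mem_of_forall_mem_of_dense F.continuous hdense
    (fun z hz => ?_) x⟩
  have hFz : F z = T ⟨z, hz⟩ := hF ⟨z, hz⟩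
  rw [SetLike.mem_coe, hFz]
  exact Submodule.mem_graph_toLinearPMap hfun ⟨z, hz⟩
end

section
/- Let A : X → 2^X be a monotone linear relation such that A0 is closed and dom A is dense in (A0)^⊥. If A is 3*-monotone, then A is paramonotone. -/
/-!
Put `(u, u') = (x - y, x' - y')`, a point of the graph with `⟪u, u'⟫ = 0`. Testing
3*-monotonicity at `z = v ∈ dom A` against the graph points `(t + 1) • (u, u')` gives the
affine function `t ↦ t ⟪v, u'⟫` bounded above, so `u' ⊥ dom A`. By density `u'` is then
orthogonal to `(A 0)ᗮ`, hence lies in the closed subspace `A 0`. So `(u, 0)` is in the graph,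
and adding it to `(y, y')` or subtracting it from `(x, x')` gives the two conclusions.
-/

open scoped InnerProductSpace

lemma eq_zero_of_forall_mul_le {c M : ℝ} (h : ∀ t : ℝ, t * c ≤ M) : c = 0 := by
  by_contra hc
  have := h ((M + 1) / c)
  rw [div_mul_cancel₀ _ hc] at this
  linarith

section

variable {X : Type*} [NormedAddCommGroup X] [InnerProductSpace ℝ X]

lemma Submodule.mem_of_orthogonal_subset_closure {K : Submodule ℝ X} [K.HasOrthogonalProjection]
    {D : Set X} (hD : (Kᗮ : Set X) ⊆ closure D) {w : X} (hw : ∀ v ∈ D, ⟪v, w⟫_ℝ = 0) :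
    w ∈ K := by
  rw [← K.orthogonal_orthogonal]
  have hclosed : IsClosed {v : X | ⟪v, w⟫_ℝ = 0} :=
    isClosed_eq (continuous_id.inner continuous_const) continuous_const
  exact fun v hv ↦ closure_minimal hw hclosed (hD hv)

lemma inner_eq_zero_of_bddAbove_threeStar {G : Submodule ℝ (X × X)} {u u' : X}
    (hu : (u, u') ∈ G) (hperp : ⟪u, u'⟫_ℝ = 0) {v : X}
    (hbdd : BddAbove {r : ℝ | ∃ y y', (y, y') ∈ G ∧ r = ⟪v - y, y' - u'⟫_ℝ}) :
    ⟪v, u'⟫_ℝ = 0 := by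
  obtain ⟨M, hM⟩ := hbdd
  refine eq_zero_of_forall_mul_le (M := M) fun t ↦ hM ⟨(t + 1) • u, (t + 1) • u', ?_, ?_⟩
  · simpa using G.smul_mem (t + 1) hu
  · have : (t + 1) • u' - u' = t • u' := by rw [add_smul, one_smul, add_sub_cancel_right]
    rw [this, real_inner_smul_right, inner_sub_left, real_inner_smul_left, hperp]
    ring

end

theorem threeStar_linear_relation_is_paramonotone_general
    {X : Type*} [NormedAddCommGroup X] [InnerProductSpace ℝ X] [CompleteSpace X]
    (A : X → Set X)
    (hlin : ∃ G : Submodule ℝ (X × X), ∀ x y, y ∈ A x ↔ (x, y) ∈ G)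
    (hA0closed : IsClosed (A 0))
    (hdense : ∀ v : X, (∀ c ∈ A 0, (inner ℝ c v : ℝ) = 0) →
      v ∈ closure {x | (A x).Nonempty})
    (h3star : ∀ z, (A z).Nonempty → ∀ x x', x' ∈ A x →
      BddAbove {r : ℝ | ∃ y y', y' ∈ A y ∧ r = inner ℝ (z - y) (y' - x')}) :
    ∀ x x' y y', x' ∈ A x → y' ∈ A y →
      (inner ℝ (x - y) (x' - y') : ℝ) = 0 → x' ∈ A y ∧ y' ∈ A x := by
  obtain ⟨G, hG⟩ := hlin
  obtain rfl : A = fun x ↦ {y | (x, y) ∈ G} := funext fun x ↦ Set.ext (hG x)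
  intro x x' y y' hx hy hperp
  have hu : (x - y, x' - y') ∈ G := G.sub_mem hx hy
  let K : Submodule ℝ X := G.comap (LinearMap.inr ℝ X X)
  have : CompleteSpace K := hA0closed.completeSpace_coe
  have hu'K : x' - y' ∈ K :=
    Submodule.mem_of_orthogonal_subset_closure (K := K) (fun v hv ↦ hdense v hv)
      fun v hv ↦ inner_eq_zero_of_bddAbove_threeStar hu hperp (h3star v hv _ _ hu)
  have hker : (x - y, 0) ∈ G := by simpa using G.sub_mem hu hu'K
  exact ⟨by simpa using G.sub_mem hx hker, by simpa using G.add_mem hy hker⟩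

/-- A 3*-monotone linear relation with A0 closed and dom A dense in (A0)^⊥ is paramonotone. -/
theorem threeStar_linear_relation_is_paramonotone
    {X : Type*} [NormedAddCommGroup X] [InnerProductSpace ℝ X] [CompleteSpace X]
    (A : X → Set X)
    (hlin : ∃ G : Submodule ℝ (X × X), ∀ x y, y ∈ A x ↔ (x, y) ∈ G)
    (hmono : ∀ x x' y y', x' ∈ A x → y' ∈ A y → (0:ℝ) ≤ inner ℝ (x - y) (x' - y'))
    (hA0closed : IsClosed (A 0))
    (hdense : ∀ v : X, (∀ c ∈ A 0, (inner ℝ c v : ℝ) = 0) →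
      v ∈ closure {x | (A x).Nonempty})
    (h3star : ∀ z, (A z).Nonempty → ∀ x x', x' ∈ A x →
      BddAbove {r : ℝ | ∃ y y', y' ∈ A y ∧ r = inner ℝ (z - y) (y' - x')}) :
    ∀ x x' y y', x' ∈ A x → y' ∈ A y →
      (inner ℝ (x - y) (x' - y') : ℝ) = 0 → x' ∈ A y ∧ y' ∈ A x :=
  threeStar_linear_relation_is_paramonotone_general A hlin hA0closed hdense h3star
end

section
/- A monotone linear relation A : X → 2^X is paramonotone if and only if for all x ∈ dom A: (⟨x, x*⟩ = 0 for some/all x* ∈ Ax) implies Ax = A0. -/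
/-!
For a linear relation, `A x = A 0` holds exactly when `0 ∈ A x`, and more generally `0 ∈ A (x - y)`
forces `A x = A y`. Paramonotonicity applied to the pair `(x, x*)`, `(0, 0)` gives `0 ∈ A x`;
conversely, graph points with `⟨x - y, x* - y*⟩ = 0` give `x* - y* ∈ A (x - y)` with vanishing
pairing, hence `A x = A y`.
-/

namespace Submodule

variable {R M N : Type*} [Ring R] [AddCommGroup M] [AddCommGroup N] [Module R M] [Module R N]

def relImage (G : Submodule R (M × N)) (x : M) : Set N := {y | (x, y) ∈ G}

variable {G : Submodule R (M × N)}

@[simp]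
theorem mem_relImage {x : M} {y : N} : y ∈ G.relImage x ↔ (x, y) ∈ G := Iff.rfl

theorem zero_mem_relImage_zero : (0 : N) ∈ G.relImage 0 := G.zero_mem

theorem sub_mem_relImage_sub {x y : M} {x' y' : N} (hx : x' ∈ G.relImage x)
    (hy : y' ∈ G.relImage y) : x' - y' ∈ G.relImage (x - y) :=
  G.sub_mem hx hy

theorem relImage_eq_of_zero_mem_relImage_sub {x y : M} (h : (0 : N) ∈ G.relImage (x - y)) :
    G.relImage x = G.relImage y := by
  ext z
  have hz : (y, z) + (x - y, 0) = (x, z) := by simp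
  simpa only [mem_relImage, hz] using G.add_mem_iff_left (x := (y, z)) h

theorem relImage_eq_relImage_zero_iff {x : M} :
    G.relImage x = G.relImage 0 ↔ (0 : N) ∈ G.relImage x := by
  refine ⟨fun h => h ▸ zero_mem_relImage_zero, fun h => ?_⟩
  exact relImage_eq_of_zero_mem_relImage_sub (by rwa [sub_zero])

end Submodule

open Submodule

theorem linear_relation_paramonotone_iff_general
    {X : Type*} [NormedAddCommGroup X] [InnerProductSpace ℝ X]
    (A : X → Set X)
    (hlin : ∃ G : Submodule ℝ (X × X), ∀ x y, y ∈ A x ↔ (x, y) ∈ G) :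
    (∀ x x' y y', x' ∈ A x → y' ∈ A y →
      (inner ℝ (x - y) (x' - y') : ℝ) = 0 → x' ∈ A y ∧ y' ∈ A x) ↔
    (∀ x x', x' ∈ A x → (inner ℝ x x' : ℝ) = 0 → A x = A 0) := by
  obtain ⟨G, hG⟩ := hlin
  obtain rfl : A = G.relImage := funext fun x => Set.ext (hG x)
  constructor
  · intro hpara x x' hx hinner
    have hx0 := (hpara x x' 0 0 hx zero_mem_relImage_zero (by simpa using hinner)).2
    exact relImage_eq_relImage_zero_iff.2 hx0
  · intro h x x' y y' hx hy hinner
    have hker : G.relImage (x - y) = G.relImage 0 := h _ _ (sub_mem_relImage_sub hx hy) hinner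
    have hxy := relImage_eq_of_zero_mem_relImage_sub (relImage_eq_relImage_zero_iff.1 hker)
    exact ⟨hxy ▸ hx, hxy ▸ hy⟩

/-- A monotone linear relation is paramonotone iff ⟨x, Ax⟩ = 0 implies Ax = A0. -/
theorem linear_relation_paramonotone_iff
    {X : Type*} [NormedAddCommGroup X] [InnerProductSpace ℝ X] [CompleteSpace X]
    (A : X → Set X)
    (hlin : ∃ G : Submodule ℝ (X × X), ∀ x y, y ∈ A x ↔ (x, y) ∈ G)
    (hmono : ∀ x x' y y', x' ∈ A x → y' ∈ A y → (0:ℝ) ≤ inner ℝ (x - y) (x' - y')) :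
    (∀ x x' y y', x' ∈ A x → y' ∈ A y →
      (inner ℝ (x - y) (x' - y') : ℝ) = 0 → x' ∈ A y ∧ y' ∈ A x) ↔
    (∀ x x', x' ∈ A x → (inner ℝ x x' : ℝ) = 0 → A x = A 0) :=
  linear_relation_paramonotone_iff_general A hlin
end

section
/- A monotone linear operator A : ℝ² → ℝ² is paramonotone if and only if A is strictly monotone or A is symmetric (equal to its transpose). -/
/-!
For a monotone `A`, the quadratic polynomial `t ↦ (z + t w) ⬝ A (z + t w)` is nonnegative, so if it
vanishes at `t = 0` its linear coefficient `w ⬝ (A + Aᵀ) z` vanishes too: the zero set of the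
quadratic form of `A` is `ker (A + Aᵀ)`. Hence `A` is paramonotone iff `ker (A + Aᵀ) ⊆ ker A`,
which holds when `A` is symmetric or when `ker (A + Aᵀ) = 0`, i.e. `A` is strictly monotone.
Conversely, if `A` is paramonotone but not strictly monotone, some `z ≠ 0` lies in
`ker A ∩ ker Aᵀ`; in dimension two this forces `A = Aᵀ`.
-/

open Matrix

namespace Matrix

variable {n : Type*} [Fintype n]

theorem dotProduct_mulVec_add_smul {R : Type*} [CommRing R] (A : Matrix n n R) (z w : n → R)
    (t : R) :
    (z + t • w) ⬝ᵥ A *ᵥ (z + t • w) =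
      w ⬝ᵥ A *ᵥ w * (t * t) + w ⬝ᵥ (A + Aᵀ) *ᵥ z * t + z ⬝ᵥ A *ᵥ z := by
  simp only [mulVec_add, mulVec_smul, add_mulVec, dotProduct_add, add_dotProduct,
    dotProduct_smul, smul_dotProduct, smul_eq_mul, dotProduct_transpose_mulVec]
  ring

variable {K : Type*} [Field K] [LinearOrder K] [IsStrictOrderedRing K] {A : Matrix n n K}

theorem dotProduct_mulVec_self_eq_zero_iff (hA : ∀ x, 0 ≤ x ⬝ᵥ A *ᵥ x) {z : n → K} :
    z ⬝ᵥ A *ᵥ z = 0 ↔ (A + Aᵀ) *ᵥ z = 0 := by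
  constructor
  · intro hz
    have polar : ∀ w, w ⬝ᵥ (A + Aᵀ) *ᵥ z = 0 := fun w => by
      have hdisc := discrim_le_zero (c := (0 : K)) fun t => by
        simpa only [dotProduct_mulVec_add_smul, hz] using hA (z + t • w)
      rw [discrim, mul_zero, sub_zero] at hdisc
      exact pow_eq_zero_iff two_ne_zero |>.mp (le_antisymm hdisc (sq_nonneg _))
    exact dotProduct_self_eq_zero.mp (polar _)
  · intro hz
    have hq : z ⬝ᵥ (A + Aᵀ) *ᵥ z = 2 * (z ⬝ᵥ A *ᵥ z) := by
      rw [add_mulVec, dotProduct_add, dotProduct_transpose_mulVec]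
      ring
    rw [hz, dotProduct_zero] at hq
    exact (mul_eq_zero.mp hq.symm).resolve_left two_ne_zero

theorem paramonotone_iff_ker_add_transpose_le_ker (hA : ∀ x, 0 ≤ x ⬝ᵥ A *ᵥ x) :
    (∀ x y : n → K, (x - y) ⬝ᵥ (A *ᵥ x - A *ᵥ y) = 0 → A *ᵥ x = A *ᵥ y) ↔
      ∀ z, (A + Aᵀ) *ᵥ z = 0 → A *ᵥ z = 0 := by
  simp only [← mulVec_sub, ← sub_eq_zero (a := A *ᵥ _), dotProduct_mulVec_self_eq_zero_iff hA]
  exact ⟨fun h z => by simpa using h z 0, fun h x y => h (x - y)⟩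

theorem strictMonotone_iff_ker_add_transpose_eq_bot (hA : ∀ x, 0 ≤ x ⬝ᵥ A *ᵥ x) :
    (∀ x y : n → K, (x - y) ⬝ᵥ (A *ᵥ x - A *ᵥ y) = 0 → x = y) ↔
      ∀ z, (A + Aᵀ) *ᵥ z = 0 → z = 0 := by
  simp only [← mulVec_sub, dotProduct_mulVec_self_eq_zero_iff hA]
  exact ⟨fun h z => by simpa using h z 0, fun h x y hxy => sub_eq_zero.mp (h (x - y) hxy)⟩

end Matrix

theorem Matrix.eq_transpose_of_mulVec_eq_zero_of_vecMul_eq_zero {R : Type*} [CommRing R]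
    [IsDomain R] {A : Matrix (Fin 2) (Fin 2) R} {z : Fin 2 → R} (hz : z ≠ 0)
    (hAz : A *ᵥ z = 0) (hzA : z ᵥ* A = 0) : A = Aᵀ := by
  have e0 := congrFun hAz 0
  have e1 := congrFun hAz 1
  have f0 := congrFun hzA 0
  have f1 := congrFun hzA 1
  simp only [mulVec, vecMul, dotProduct, Fin.sum_univ_two, Pi.zero_apply] at e0 e1 f0 f1
  have h0 : (A 0 1 - A 1 0) * z 0 = 0 := by linear_combination f1 - e1
  have h1 : (A 0 1 - A 1 0) * z 1 = 0 := by linear_combination e0 - f0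
  have hsym : A 0 1 = A 1 0 := by
    by_contra hne
    apply hz
    ext i
    fin_cases i
    · exact (mul_eq_zero.mp h0).resolve_left (sub_ne_zero.mpr hne)
    · exact (mul_eq_zero.mp h1).resolve_left (sub_ne_zero.mpr hne)
  ext i j
  fin_cases i <;> fin_cases j <;> simp [hsym]

/-- A monotone linear operator on ℝ² is paramonotone iff it is strictly monotone or symmetric. -/
theorem paramonotone_iff_strict_or_symmetric_R2
    (A : Matrix (Fin 2) (Fin 2) ℝ)
    (hmono : ∀ x : Fin 2 → ℝ, (0:ℝ) ≤ x ⬝ᵥ A.mulVec x) :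
    (∀ x y : Fin 2 → ℝ, (x - y) ⬝ᵥ (A.mulVec x - A.mulVec y) = 0 →
        A.mulVec x = A.mulVec y) ↔
    ((∀ x y : Fin 2 → ℝ, (x - y) ⬝ᵥ (A.mulVec x - A.mulVec y) = 0 → x = y) ∨
      A = Aᵀ) := by
  rw [paramonotone_iff_ker_add_transpose_le_ker hmono,
    strictMonotone_iff_ker_add_transpose_eq_bot hmono]
  constructor
  · intro hker
    refine or_iff_not_imp_left.mpr fun hstrict => ?_
    push Not at hstrict
    obtain ⟨z, hsum, hz⟩ := hstrict
    have hAz := hker z hsum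
    rw [add_mulVec, hAz, zero_add, mulVec_transpose] at hsum
    exact eq_transpose_of_mulVec_eq_zero_of_vecMul_eq_zero hz hAz hsum
  · rintro (hstrict | hsym) z hz
    · simp [hstrict z hz]
    · rw [← hsym, add_mulVec, ← two_smul ℝ] at hz
      exact (smul_eq_zero.mp hz).resolve_left two_ne_zero
end

section
/- Let A be a monotone linear operator on ℝ² with matrix entries [[a, c],[b, d]]. If A is 3-cyclic monotone, then max{|b|, |c|} ≤ a + d. -/
/-! Testing the 3-cyclic inequality on `x = (∓1, 0)`, `y = (0, 1)`, `z = 0` leaves `a ± b + d ≥ 0`,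
and symmetrically `x = (0, ∓1)`, `y = (1, 0)`, `z = 0` leaves `a ± c + d ≥ 0`. -/

lemma abs_le_add_of_forall_quadratic_nonneg {R : Type*} [CommRing R] [LinearOrder R]
    [IsStrictOrderedRing R] {a b c : R} (h : ∀ t : R, 0 ≤ a * t ^ 2 + b * t + c) :
    |b| ≤ a + c := by
  have h₁ := h 1
  have h₂ := h (-1)
  simp only [one_pow, neg_one_sq, mul_one, mul_neg] at h₁ h₂
  exact abs_le.2 ⟨by linarith, by linarith⟩

theorem threeCyclic_R2_necessary_condition_general
    (a b c d : ℝ)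
    (A : ℝ × ℝ → ℝ × ℝ)
    (hA : ∀ p : ℝ × ℝ, A p = (a * p.1 + c * p.2, b * p.1 + d * p.2))
    (h3cm : ∀ x y z : ℝ × ℝ,
      (0:ℝ) ≤ ((x.1 - y.1) * (A x).1 + (x.2 - y.2) * (A x).2)
            + ((y.1 - z.1) * (A y).1 + (y.2 - z.2) * (A y).2)
            + ((z.1 - x.1) * (A z).1 + (z.2 - x.2) * (A z).2)) :
    max |b| |c| ≤ a + d := by
  have hb : ∀ t : ℝ, 0 ≤ a * t ^ 2 + b * t + d := fun t => by
    have := h3cm (-t, 0) (0, 1) (0, 0)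
    simp only [hA] at this
    linear_combination this
  have hc : ∀ t : ℝ, 0 ≤ d * t ^ 2 + c * t + a := fun t => by
    have := h3cm (0, -t) (1, 0) (0, 0)
    simp only [hA] at this
    linear_combination this
  exact max_le (abs_le_add_of_forall_quadratic_nonneg hb)
    ((abs_le_add_of_forall_quadratic_nonneg hc).trans_eq (add_comm d a))

/-- Necessary condition for 3-cyclic monotonicity of a linear operator on ℝ². -/
theorem threeCyclic_R2_necessary_condition
    (a b c d : ℝ)
    (A : ℝ × ℝ → ℝ × ℝ)
    (hA : ∀ p : ℝ × ℝ, A p = (a * p.1 + c * p.2, b * p.1 + d * p.2))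
    (hmono : ∀ x : ℝ × ℝ, (0:ℝ) ≤ x.1 * (A x).1 + x.2 * (A x).2)
    (h3cm : ∀ x y z : ℝ × ℝ,
      (0:ℝ) ≤ ((x.1 - y.1) * (A x).1 + (x.2 - y.2) * (A x).2)
            + ((y.1 - z.1) * (A y).1 + (y.2 - z.2) * (A y).2)
            + ((z.1 - x.1) * (A z).1 + (z.2 - x.2) * (A z).2)) :
    max |b| |c| ≤ a + d :=
  threeCyclic_R2_necessary_condition_general a b c d A hA h3cm
end
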